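/- arXiv:1102.1264 — 2 statements merged into one kernel-verified Lean document; each statement's English description precedes it below -/
import Mathlib

section
/- Let f : ℝⁿ → ℝ be convex, and let F₁ and F₂ be two faces of f (intersections of the graph of f with supporting affine hyperplanes) whose relative interiors both contain a common point x. Then there exists a face of f containing both F₁ and F₂ and containing x in its relative interior. -/
/-!
If `x` lies in the relative interior of a face `F₂`, every face `F₁` through `x` contains `F₂`:
with `ℓ₁` an affine minorant of `f` cutting out `F₁` and `ℓ₂` one cutting out `F₂`, the affine
function `ℓ₂ - ℓ₁` equals `f - ℓ₁ ≥ 0` on `F₂` and vanishes at the relative interior point `x`.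
An affine function that is nonnegative on a set and vanishes at a relative interior point
vanishes on the whole set, because the segment from any point of the set through `x` can be
prolonged a little beyond `x`. Hence the two faces coincide and `F₁` itself is the face sought.
-/

open scoped RealInnerProductSpace

/-- A face of a convex function `f`: the intersection of the graph of `f` with a
supporting (non-vertical) affine hyperplane, projected to the domain. -/
def IsFaceOf {n : ℕ} (f : EuclideanSpace ℝ (Fin n) → ℝ)
    (F : Set (EuclideanSpace ℝ (Fin n))) : Prop :=
  ∃ (c : EuclideanSpace ℝ (Fin n)) (b : ℝ),
    (∀ y, ⟪c, y⟫ + b ≤ f y) ∧ F = {y | f y = ⟪c, y⟫ + b}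

theorem exists_neg_lineMap_mem_of_mem_intrinsicInterior {E : Type*} [AddCommGroup E]
    [Module ℝ E] [TopologicalSpace E] [IsTopologicalAddGroup E] [ContinuousSMul ℝ E]
    {s : Set E} {x y : E} (hx : x ∈ intrinsicInterior ℝ s) (hy : y ∈ s) :
    ∃ t : ℝ, t < 0 ∧ AffineMap.lineMap x y t ∈ s := by
  obtain ⟨u, hu, rfl⟩ := mem_intrinsicInterior.1 hx
  let γ : ℝ → affineSpan ℝ s := fun t =>
    ⟨AffineMap.lineMap (u : E) y t, AffineMap.lineMap_mem t u.2 (subset_affineSpan ℝ s hy)⟩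
  have hγ : Continuous γ := AffineMap.lineMap_continuous.subtype_mk _
  have hγ0 : γ 0 = u := Subtype.ext (AffineMap.lineMap_apply_zero _ _)
  have hnear : ∀ᶠ t in nhds 0, γ t ∈ interior ((↑) ⁻¹' s) :=
    hγ.continuousAt.preimage_mem_nhds (hγ0 ▸ isOpen_interior.mem_nhds hu)
  obtain ⟨t, hts, ht⟩ :=
    ((hnear.filter_mono nhdsWithin_le_nhds).and (self_mem_nhdsWithin (s := Set.Iio 0))).exists
  exact ⟨t, ht, (interior_subset hts :)⟩

theorem AffineMap.eqOn_zero_of_nonneg_of_apply_eq_zero {E : Type*} [AddCommGroup E]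
    [Module ℝ E] [TopologicalSpace E] [IsTopologicalAddGroup E] [ContinuousSMul ℝ E]
    {s : Set E} {x : E} (g : E →ᵃ[ℝ] ℝ) (hg : ∀ y ∈ s, 0 ≤ g y)
    (hx : x ∈ intrinsicInterior ℝ s) (hgx : g x = 0) : Set.EqOn g 0 s := by
  intro y hy
  obtain ⟨t, ht, hmem⟩ := exists_neg_lineMap_mem_of_mem_intrinsicInterior hx hy
  have hline : 0 ≤ t * g y := by
    simpa [AffineMap.apply_lineMap, hgx, AffineMap.lineMap_apply_ring'] using hg _ hmem
  exact le_antisymm (nonpos_of_mul_nonneg_right hline ht) (hg y hy)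

theorem IsFaceOf.subset_of_mem_intrinsicInterior {n : ℕ} {f : EuclideanSpace ℝ (Fin n) → ℝ}
    {F₁ F₂ : Set (EuclideanSpace ℝ (Fin n))} {x : EuclideanSpace ℝ (Fin n)}
    (h₁ : IsFaceOf f F₁) (h₂ : IsFaceOf f F₂) (hx₁ : x ∈ F₁)
    (hx₂ : x ∈ intrinsicInterior ℝ F₂) : F₂ ⊆ F₁ := by
  obtain ⟨c₁, b₁, hle₁, rfl⟩ := h₁
  obtain ⟨c₂, b₂, -, rfl⟩ := h₂
  let g : EuclideanSpace ℝ (Fin n) →ᵃ[ℝ] ℝ :=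
    (innerₛₗ ℝ (c₂ - c₁)).toAffineMap + AffineMap.const ℝ _ (b₂ - b₁)
  have hg : ∀ y, g y = (⟪c₂, y⟫ + b₂) - (⟪c₁, y⟫ + b₁) := fun y => by
    simp only [g, AffineMap.coe_add, LinearMap.coe_toAffineMap, AffineMap.coe_const, Pi.add_apply,
      innerₛₗ_apply_apply, Function.const_apply, inner_sub_left]
    ring
  have hxF₂ : f x = ⟪c₂, x⟫ + b₂ := (intrinsicInterior_subset hx₂ :)
  have hvanish := g.eqOn_zero_of_nonneg_of_apply_eq_zero
    (fun y (hy : f y = _) => by linarith [hg y, hle₁ y]) hx₂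
    (by linarith [hg x, show f x = ⟪c₁, x⟫ + b₁ from hx₁])
  intro y (hy : f y = _)
  have hgy : g y = 0 := hvanish hy
  show f y = _
  linarith [hg y]

theorem stmt0_general {n : ℕ} (f : EuclideanSpace ℝ (Fin n) → ℝ)
    (F₁ F₂ : Set (EuclideanSpace ℝ (Fin n)))
    (h₁ : IsFaceOf f F₁) (h₂ : IsFaceOf f F₂)
    (x : EuclideanSpace ℝ (Fin n))
    (hx₁ : x ∈ intrinsicInterior ℝ F₁) (hx₂ : x ∈ intrinsicInterior ℝ F₂) :
    ∃ F, IsFaceOf f F ∧ F₁ ⊆ F ∧ F₂ ⊆ F ∧ x ∈ intrinsicInterior ℝ F :=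
  ⟨F₁, h₁, subset_rfl,
    h₁.subset_of_mem_intrinsicInterior h₂ (intrinsicInterior_subset hx₁) hx₂, hx₁⟩

theorem stmt0 {n : ℕ} (f : EuclideanSpace ℝ (Fin n) → ℝ)
    (hf : ConvexOn ℝ Set.univ f)
    (F₁ F₂ : Set (EuclideanSpace ℝ (Fin n)))
    (h₁ : IsFaceOf f F₁) (h₂ : IsFaceOf f F₂)
    (x : EuclideanSpace ℝ (Fin n))
    (hx₁ : x ∈ intrinsicInterior ℝ F₁) (hx₂ : x ∈ intrinsicInterior ℝ F₂) :
    ∃ F, IsFaceOf f F ∧ F₁ ⊆ F ∧ F₂ ⊆ F ∧ x ∈ intrinsicInterior ℝ F :=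
  stmt0_general f F₁ F₂ h₁ h₂ x hx₁ hx₂
end

section
/- Let α be an irrational real number and suppose a sequence (tₙ) in ℝ/ℤ contains, for every n ∈ ℕ, an arithmetic progression of length n with common difference α (i.e. there is sₙ ∈ ℝ/ℤ with sₙ, sₙ+α, ..., sₙ+(n−1)α all in the closure of {tₖ}). Then the closure of {tₙ : n ∈ ℕ} in ℝ/ℤ is all of ℝ/ℤ. -/
/-!
In a compact group the multiples `n • a`, `n : ℕ`, are dense as soon as the integer multiples
are, which for `a = α` on the circle is irrationality. By compactness the first `N` of them are
already `ε`-dense, and so is every translate `s + i • a`, `i < N`; a closed set containing such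
progressions of every length is therefore `ε`-dense for every `ε`, hence everything.
-/

open Set

theorem DenseRange.exists_forall_exists_lt_dist_lt {X : Type*} [PseudoMetricSpace X]
    [CompactSpace X] {f : ℕ → X} (hf : DenseRange f) {ε : ℝ} (hε : 0 < ε) :
    ∃ N, ∀ x, ∃ i < N, dist x (f i) < ε := by
  have hcover : univ ⊆ ⋃ i, Metric.ball (f i) ε := fun x _ ↦ by
    obtain ⟨i, hi⟩ := hf.exists_dist_lt x hε
    exact mem_iUnion.mpr ⟨i, Metric.mem_ball.mpr hi⟩
  obtain ⟨F, hF⟩ := isCompact_univ.elim_finite_subcover _ (fun _ ↦ Metric.isOpen_ball) hcover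
  obtain ⟨N, hN⟩ := F.exists_nat_subset_range
  refine ⟨N, fun x ↦ ?_⟩
  obtain ⟨i, hiF, hi⟩ := mem_iUnion₂.mp (hF (mem_univ x))
  exact ⟨i, Finset.mem_range.mp (hN hiF), Metric.mem_ball.mp hi⟩

theorem IsClosed.eq_univ_of_forall_exists_progression {G : Type*} [SeminormedAddCommGroup G]
    [CompactSpace G] {a : G} (ha : DenseRange (· • a : ℕ → G)) {C : Set G} (hC : IsClosed C)
    (h : ∀ n : ℕ, ∃ s, ∀ i < n, s + i • a ∈ C) : C = univ := by
  refine eq_univ_of_forall fun x ↦ ?_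
  rw [← hC.closure_eq, Metric.mem_closure_iff]
  intro ε hε
  obtain ⟨N, hN⟩ := ha.exists_forall_exists_lt_dist_lt hε
  obtain ⟨s, hs⟩ := h N
  obtain ⟨i, hiN, hi⟩ := hN (x - s)
  refine ⟨s + i • a, hs i hiN, ?_⟩
  rwa [dist_eq_norm, ← sub_sub, ← dist_eq_norm]

/-- If `α` is irrational and the closure of `{tₙ}` in `ℝ/ℤ` contains, for every `n`, an
arithmetic progression of length `n` with common difference `α`, then the closure of
`{tₙ}` is the whole circle. -/
theorem stmt8 (α : ℝ) (hα : Irrational α) (t : ℕ → AddCircle (1 : ℝ))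
    (h : ∀ n : ℕ, ∃ s : AddCircle (1 : ℝ),
      ∀ i < n, s + (i : ℕ) • ((α : AddCircle (1 : ℝ))) ∈ closure (Set.range t)) :
    closure (Set.range t) = Set.univ := by
  have hdense : DenseRange (· • (α : AddCircle (1 : ℝ)) : ℕ → AddCircle (1 : ℝ)) :=
    denseRange_zsmul_iff_nsmul.mp (AddCircle.denseRange_zsmul_coe_iff.mpr (by rwa [div_one]))
  exact isClosed_closure.eq_univ_of_forall_exists_progression hdense h
end
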